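/- In the traversal Trav of a rooted ordered tree, for every vertex v, the number of vertex-visits strictly before the second visit to v is even if and only if the depth of v is odd. Consequently, for each vertex exactly one of ν_v^{(1)}, ν_v^{(2)} is even. -/

import Mathlib

/-- A finite rooted ordered tree: a root with an ordered list of subtrees. -/
inductive OTree : Type where
  | node : List OTree → OTree

mutual
/-- The visit sequence of the traversal `Trav` of the subtree rooted at the
vertex with address `a`; each vertex is visited exactly twice. -/
def trav : OTree → List ℕ → List (List ℕ)
  | .node [], a => [a, a]
  | .node (t :: ts), a => a :: (travList (t :: ts) a 0 ++ [a])

def travList : List OTree → List ℕ → ℕ → List (List ℕ)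
  | [], _, _ => []
  | t :: ts, a, i => trav t (a ++ [i]) ++ travList ts a (i + 1)
end

/-- `ν_v⁽¹⁾`: the number of visits strictly before the first visit to `v`. -/
def nu1 (t : OTree) (a : List ℕ) : ℕ := (trav t []).idxOf a

/-- `ν_v⁽²⁾`: the number of visits strictly before the second visit to `v`. -/
def nu2 (t : OTree) (a : List ℕ) : ℕ :=
  nu1 t a + 1 + ((trav t []).drop (nu1 t a + 1)).idxOf a

/-! Every traversal `trav s a` has the shape `a, (traversals of the subtrees of s), a`, and hence
even length. Consequently the visits strictly between the two visits to `v` are an even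
number, so `ν_v⁽²⁾ - ν_v⁽¹⁾` is odd; and the visits before the first visit to `v` are complete
traversals of subtrees together with the first visits to the `depth v` proper ancestors of `v`,
so `ν_v⁽¹⁾ ≡ depth v (mod 2)`. -/

mutual
theorem even_length_trav (t : OTree) (b : List ℕ) : Even (trav t b).length :=
  match t with
  | .node [] => by simp [trav]
  | .node (t₀ :: ts) => by
    simpa [trav, Nat.even_add_one] using even_length_travList (t₀ :: ts) b 0

theorem even_length_travList (ts : List OTree) (b : List ℕ) (i : ℕ) :
    Even (travList ts b i).length :=
  match ts with
  | [] => by simp [travList]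
  | t₀ :: rest => by
    simpa only [travList, List.length_append] using
      (even_length_trav t₀ (b ++ [i])).add (even_length_travList rest b (i + 1))
end

mutual
theorem length_le_of_mem_trav (t : OTree) (b : List ℕ) :
    ∀ x ∈ trav t b, b.length ≤ x.length :=
  match t with
  | .node [] => by simp [trav]
  | .node (t₀ :: ts) => by
    simp only [trav, List.mem_cons, List.mem_append, List.not_mem_nil, or_false]
    rintro x (rfl | hx | rfl)
    · exact le_rfl
    · exact (length_lt_of_mem_travList (t₀ :: ts) b 0 x hx).le
    · exact le_rfl

theorem length_lt_of_mem_travList (ts : List OTree) (b : List ℕ) (i : ℕ) :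
    ∀ x ∈ travList ts b i, b.length < x.length :=
  match ts with
  | [] => by simp [travList]
  | t₀ :: rest => by
    simp only [travList, List.mem_append]
    rintro x (hx | hx)
    · simpa [Nat.succ_le_iff] using length_le_of_mem_trav t₀ (b ++ [i]) x hx
    · exact length_lt_of_mem_travList rest b (i + 1) x hx
end

theorem exists_trav_eq_cons_append (s : OTree) (a : List ℕ) :
    ∃ M, trav s a = a :: (M ++ [a]) ∧ a ∉ M ∧ Even M.length :=
  match s with
  | .node [] => ⟨[], rfl, List.not_mem_nil, by simp⟩
  | .node (t :: ts) =>
    ⟨travList (t :: ts) a 0, by rw [trav],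
      fun h => (length_lt_of_mem_travList (t :: ts) a 0 a h).false,
      even_length_travList (t :: ts) a 0⟩

mutual
theorem exists_trav_eq_append_trav (t : OTree) (b : List ℕ) :
    ∀ a ∈ trav t b, ∃ (s : OTree) (P S : List (List ℕ)),
      trav t b = P ++ trav s a ++ S ∧ a ∉ P ∧ Even (P.length + b.length + a.length) :=
  match t with
  | .node [] => by
    intro a ha
    obtain rfl : a = b := by simpa [trav] using ha
    exact ⟨.node [], [], [], by simp, List.not_mem_nil, by simp⟩
  | .node (t₀ :: ts) => by
    intro a ha
    by_cases hab : a = b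
    · subst hab
      exact ⟨.node (t₀ :: ts), [], [], by simp, List.not_mem_nil, by simp⟩
    have haL : a ∈ travList (t₀ :: ts) b 0 := by simpa [trav, hab] using ha
    obtain ⟨s, P, S, hPS, haP, hpar⟩ := exists_travList_eq_append_trav (t₀ :: ts) b 0 a haL
    refine ⟨s, b :: P, S ++ [b], by simp [trav, hPS], by simp [hab, haP], ?_⟩
    simpa [add_right_comm] using hpar

theorem exists_travList_eq_append_trav (ts : List OTree) (b : List ℕ) (i : ℕ) :
    ∀ a ∈ travList ts b i, ∃ (s : OTree) (P S : List (List ℕ)),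
      travList ts b i = P ++ trav s a ++ S ∧ a ∉ P ∧ Even (P.length + b.length + 1 + a.length) :=
  match ts with
  | [] => by simp [travList]
  | t₀ :: rest => by
    intro a ha
    by_cases hx : a ∈ trav t₀ (b ++ [i])
    · obtain ⟨s, P, S, hPS, haP, hpar⟩ := exists_trav_eq_append_trav t₀ (b ++ [i]) a hx
      refine ⟨s, P, S ++ travList rest b (i + 1), by simp [travList, hPS], haP, ?_⟩
      simpa [add_assoc] using hpar
    have hy : a ∈ travList rest b (i + 1) := by simpa [travList, hx] using ha
    obtain ⟨s, P, S, hPS, haP, hpar⟩ := exists_travList_eq_append_trav rest b (i + 1) a hy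
    refine ⟨s, trav t₀ (b ++ [i]) ++ P, S, by simp [travList, hPS], by simp [hx, haP], ?_⟩
    simpa [add_assoc] using (even_length_trav t₀ (b ++ [i])).add hpar
end

/-- In the traversal `Trav`, for every vertex `v` the number of visits strictly
before the second visit to `v` is even iff the depth of `v` is odd; consequently
exactly one of `ν_v⁽¹⁾`, `ν_v⁽²⁾` is even. -/
theorem trav_second_visit_parity (t : OTree) (a : List ℕ) (ha : a ∈ trav t []) :
    (Even (nu2 t a) ↔ Odd a.length) ∧ (Even (nu1 t a) ↔ ¬ Even (nu2 t a)) := by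
  obtain ⟨s, P, S, ht, haP, hP⟩ := exists_trav_eq_append_trav t [] a ha
  obtain ⟨M, hs, haM, hM⟩ := exists_trav_eq_cons_append s a
  have ht' : trav t [] = P ++ a :: (M ++ a :: S) := by simp [ht, hs]
  have h1 : nu1 t a = P.length := by simp [nu1, ht', List.idxOf_append_of_notMem haP]
  have h2 : nu2 t a = P.length + 1 + M.length := by
    have hdrop : (trav t []).drop (P.length + 1) = M ++ a :: S := by simp [ht']
    simp [nu2, h1, hdrop, List.idxOf_append_of_notMem haM]
  simp only [h1, h2, List.length_nil, add_zero, Nat.even_iff, Nat.odd_iff] at hP hM ⊢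
  omega
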